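/- For each integer n ≥ 1, let Hₙ := {(x₁, x₂) ∈ ℝ² : −1/2 ≤ x₂ ≤ 1/2 and 0 ≤ x₁ ≤ 1/n + 1 − 2x₂}. Then: (i) each Hₙ is a Delzant polygon; (ii) the sequence (Hₙ) is Cauchy for d, i.e., λ(H_m Δ H_n) → 0 as m, n → ∞; (iii) there is no Delzant polygon Δ with λ(Hₙ Δ Δ) → 0. In particular, the space of Delzant polygons with the metric d is not complete. -/

import Mathlib

open MeasureTheory Set Metric Filter

noncomputable section

abbrev Plane := EuclideanSpace ℝ (Fin 2)

/-- The real vector in the plane determined by an integer vector. -/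
def vec (u : Fin 2 → ℤ) : Plane := WithLp.toLp 2 (fun i => (u i : ℝ))

/-- A Delzant polygon: compact, convex, of positive Lebesgue measure, and at every
extreme point the polygon locally coincides with a cone spanned by a `ℤ`-basis of `ℤ²`. -/
def IsDelzant (Δ : Set Plane) : Prop :=
  IsCompact Δ ∧ Convex ℝ Δ ∧ 0 < volume Δ ∧
  ∀ v ∈ Δ.extremePoints ℝ, ∃ u₁ u₂ : Fin 2 → ℤ,
    LinearIndependent ℝ ![vec u₁, vec u₂] ∧
    (u₁ 0 * u₂ 1 - u₁ 1 * u₂ 0 = 1 ∨ u₁ 0 * u₂ 1 - u₁ 1 * u₂ 0 = -1) ∧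
    ∃ ε > (0:ℝ), Δ ∩ closedBall v ε =
      {x : Plane | ∃ t₁ t₂ : ℝ, 0 ≤ t₁ ∧ 0 ≤ t₂ ∧ x = v + t₁ • vec u₁ + t₂ • vec u₂}
        ∩ closedBall v ε

/-- The Hirzebruch trapezoid $H_n = H_{1/n + 1, 1, 2}$ (height 1, slanted edge of slope
$-1/2$, top edge of length $1/n$). -/
def Htrap (n : ℕ) : Set Plane :=
  {x : Plane | -(1/2) ≤ x 1 ∧ x 1 ≤ 1/2 ∧ 0 ≤ x 0 ∧ x 0 ≤ 1/(n:ℝ) + 1 - 2 * x 1}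

/-!
Write `H r` for the trapezoid with top edge of length `r`, so that `Htrap n = H (1/n)`. For
`r > 0`, `H r` is the convex hull of its four vertices, and at every vertex its two edges are
spanned by a basis of `ℤ²`, so it is Delzant. The trapezoids decrease to the triangle
`H 0`, so by continuity of the measure from above they converge to `H 0` in the
symmetric-difference distance, and in particular form a Cauchy sequence. A closed convex set of
positive area is determined by its class modulo null sets, so a Delzant limit would have to be
`H 0` itself. But at the vertex `(0, 1/2)` the edges of `H 0` point along `(0, -1)` and `(2, -1)`,
which span a sublattice of index `2` in `ℤ²`.
-/

open scoped symmDiff Topology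

section SymmDiff

variable {α : Type*} [MeasurableSpace α] {μ : Measure α}

lemma measure_symmDiff_eq_zero_of_tendsto {ι : Type*} {l : Filter ι} [l.NeBot] {s : ι → Set α}
    {a b : Set α} (ha : Tendsto (fun i => μ (s i ∆ a)) l (𝓝 0))
    (hb : Tendsto (fun i => μ (s i ∆ b)) l (𝓝 0)) : μ (a ∆ b) = 0 := by
  refine le_antisymm (ge_of_tendsto (by simpa using ha.add hb) (.of_forall fun i => ?_)) zero_le
  calc μ (a ∆ b) ≤ μ (a ∆ s i) + μ (s i ∆ b) := measure_symmDiff_le _ _ _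
    _ = μ (s i ∆ a) + μ (s i ∆ b) := by rw [symmDiff_comm a]

lemma exists_forall_ge_measure_symmDiff_lt {s : ℕ → Set α} {a : Set α}
    (ha : Tendsto (fun n => μ (s n ∆ a)) atTop (𝓝 0)) {ε : ℝ} (hε : 0 < ε) :
    ∃ N, ∀ m n, N ≤ m → N ≤ n → μ (s m ∆ s n) < ENNReal.ofReal ε := by
  obtain ⟨N, hN⟩ := eventually_atTop.1
    (ha.eventually (gt_mem_nhds (ENNReal.ofReal_pos.2 (half_pos hε))))
  refine ⟨N, fun m n hm hn => ?_⟩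
  calc μ (s m ∆ s n) ≤ μ (s m ∆ a) + μ (s n ∆ a) := by
        simpa only [symmDiff_comm a] using measure_symmDiff_le (s m) a (s n)
    _ < ENNReal.ofReal (ε / 2) + ENNReal.ofReal (ε / 2) := ENNReal.add_lt_add (hN m hm) (hN n hn)
    _ = ENNReal.ofReal ε := by
        rw [← ENNReal.ofReal_add (half_pos hε).le (half_pos hε).le, add_halves]

end SymmDiff

section ConvexBody

variable {E : Type*} [NormedAddCommGroup E] [NormedSpace ℝ E] [MeasurableSpace E] {A B : Set E}

lemma Convex.subset_of_measure_diff_eq_zero (μ : Measure E) [μ.IsOpenPosMeasure]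
    (hA : Convex ℝ A) (hAi : (interior A).Nonempty) (hB : IsClosed B) (h : μ (A \ B) = 0) :
    A ⊆ B := by
  have hint : interior A ⊆ B :=
    sdiff_eq_empty.1 <| ((isOpen_interior.sdiff hB).measure_eq_zero_iff μ).1 <|
      measure_mono_null (sdiff_subset_sdiff_left interior_subset) h
  calc A ⊆ closure A := subset_closure
    _ = closure (interior A) := (hA.closure_interior_eq_closure_of_nonempty_interior hAi).symm
    _ ⊆ B := closure_minimal hint hB

variable [BorelSpace E] [FiniteDimensional ℝ E] (μ : Measure E) [μ.IsAddHaarMeasure]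

lemma Convex.interior_nonempty_of_measure_pos (hA : Convex ℝ A) (h : 0 < μ A) :
    (interior A).Nonempty := by
  rw [hA.interior_nonempty_iff_affineSpan_eq_top]
  by_contra hne
  exact h.ne' (measure_mono_null (subset_affineSpan ℝ A) (Measure.addHaar_affineSubspace μ _ hne))

lemma Convex.eq_of_measure_symmDiff_eq_zero (hA : Convex ℝ A) (hB : Convex ℝ B)
    (hAc : IsClosed A) (hBc : IsClosed B) (hA₀ : 0 < μ A) (hB₀ : 0 < μ B) (h : μ (A ∆ B) = 0) :
    A = B :=
  (hA.subset_of_measure_diff_eq_zero μ (hA.interior_nonempty_of_measure_pos μ hA₀) hBc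
      (measure_mono_null subset_union_left h)).antisymm
    (hB.subset_of_measure_diff_eq_zero μ (hB.interior_nonempty_of_measure_pos μ hB₀) hAc
      (measure_mono_null subset_union_right h))

end ConvexBody

lemma map_eq_zero_or_map_eq_zero_of_smul_add_smul {E : Type*} [AddCommGroup E] [Module ℝ E]
    (φ : E →ₗ[ℝ] ℝ) {u₁ u₂ : E} {t₁ t₂ : ℝ} (ht₁ : 0 ≤ t₁) (ht₂ : 0 ≤ t₂) (hu₁ : 0 ≤ φ u₁)
    (hu₂ : 0 ≤ φ u₂) (hne : t₁ • u₁ + t₂ • u₂ ≠ 0) (hφ : φ (t₁ • u₁ + t₂ • u₂) = 0) :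
    φ u₁ = 0 ∨ φ u₂ = 0 := by
  rw [map_add, map_smul, map_smul, smul_eq_mul, smul_eq_mul] at hφ
  obtain ⟨h₁, h₂⟩ := (add_eq_zero_iff_of_nonneg (mul_nonneg ht₁ hu₁) (mul_nonneg ht₂ hu₂)).1 hφ
  by_contra! h
  obtain rfl := (mul_eq_zero.1 h₁).resolve_right h.1
  obtain rfl := (mul_eq_zero.1 h₂).resolve_right h.2
  simp at hne

lemma exists_pos_add_smul_mem_of_inter_closedBall_eq {E : Type*} [NormedAddCommGroup E]
    [NormedSpace ℝ E] {S T : Set E} {v w : E} {ε : ℝ}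
    (hε : 0 < ε) (h : S ∩ closedBall v ε = T ∩ closedBall v ε)
    (hS : ∀ t : ℝ, 0 < t → t ≤ 1 → v + t • w ∈ S) : ∃ t : ℝ, 0 < t ∧ v + t • w ∈ T := by
  have hw := norm_nonneg w
  set t := ε / (‖w‖ + ε)
  have ht : 0 < t := by positivity
  have hball : v + t • w ∈ closedBall v ε := by
    rw [mem_closedBall, dist_self_add_left, norm_smul, Real.norm_of_nonneg ht.le,
      div_mul_eq_mul_div, div_le_iff₀ (by positivity)]
    nlinarith
  have hmem : v + t • w ∈ S ∩ closedBall v ε :=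
    ⟨hS t ht (div_le_one_of_le₀ (by linarith) (by positivity)), hball⟩
  exact ⟨t, ht, (h ▸ hmem).1⟩

def pt (a b : ℝ) : Plane := !₂[a, b]

@[simp] lemma pt_apply_zero (a b : ℝ) : pt a b 0 = a := rfl
@[simp] lemma pt_apply_one (a b : ℝ) : pt a b 1 = b := rfl

lemma Plane.ext_iff' {x y : Plane} : x = y ↔ x 0 = y 0 ∧ x 1 = y 1 := by
  refine ⟨by rintro rfl; exact ⟨rfl, rfl⟩, fun ⟨h0, h1⟩ => ?_⟩
  ext i; fin_cases i; exacts [h0, h1]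

lemma abs_sub_apply_le_dist (x y : Plane) (i : Fin 2) : |x i - y i| ≤ dist x y :=
  PiLp.dist_apply_le x y i

lemma mem_segment_of_apply {p q z : Plane} {θ : ℝ} (hθ₀ : 0 ≤ θ) (hθ₁ : θ ≤ 1)
    (h₀ : z 0 = (1 - θ) * p 0 + θ * q 0) (h₁ : z 1 = (1 - θ) * p 1 + θ * q 1) :
    z ∈ segment ℝ p q :=
  ⟨1 - θ, θ, by linarith, hθ₀, by ring, by simp [Plane.ext_iff', h₀, h₁]⟩

section Cone

variable {v x : Plane} {u₁ u₂ : Fin 2 → ℤ}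

def cone (v : Plane) (u₁ u₂ : Fin 2 → ℤ) : Set Plane :=
  {x : Plane | ∃ t₁ t₂ : ℝ, 0 ≤ t₁ ∧ 0 ≤ t₂ ∧ x = v + t₁ • vec u₁ + t₂ • vec u₂}

def IsDelzantVertex (Δ : Set Plane) (v : Plane) : Prop :=
  ∃ u₁ u₂ : Fin 2 → ℤ, LinearIndependent ℝ ![vec u₁, vec u₂] ∧
    (u₁ 0 * u₂ 1 - u₁ 1 * u₂ 0 = 1 ∨ u₁ 0 * u₂ 1 - u₁ 1 * u₂ 0 = -1) ∧
    ∃ ε > (0:ℝ), Δ ∩ closedBall v ε = cone v u₁ u₂ ∩ closedBall v ε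

lemma isDelzant_iff {Δ : Set Plane} :
    IsDelzant Δ ↔ IsCompact Δ ∧ Convex ℝ Δ ∧ 0 < volume Δ ∧
      ∀ v ∈ Δ.extremePoints ℝ, IsDelzantVertex Δ v :=
  Iff.rfl

lemma eq_smul_add_smul_iff (hdet : u₁ 0 * u₂ 1 - u₁ 1 * u₂ 0 = 1) (w : Plane) (t₁ t₂ : ℝ) :
    w = t₁ • vec u₁ + t₂ • vec u₂ ↔
      t₁ = w 0 * u₂ 1 - w 1 * u₂ 0 ∧ t₂ = u₁ 0 * w 1 - u₁ 1 * w 0 := by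
  have hdet' : (u₁ 0 * u₂ 1 - u₁ 1 * u₂ 0 : ℝ) = 1 := by exact_mod_cast hdet
  simp only [Plane.ext_iff', PiLp.add_apply, PiLp.smul_apply, vec, smul_eq_mul]
  constructor
  · rintro ⟨h0, h1⟩
    constructor
    · linear_combination -t₁ * hdet' - u₂ 1 * h0 + u₂ 0 * h1
    · linear_combination -t₂ * hdet' + u₁ 1 * h0 - u₁ 0 * h1
  · rintro ⟨rfl, rfl⟩
    constructor
    · linear_combination -(w 0) * hdet'
    · linear_combination -(w 1) * hdet'

lemma mem_cone_iff (hdet : u₁ 0 * u₂ 1 - u₁ 1 * u₂ 0 = 1) :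
    x ∈ cone v u₁ u₂ ↔
      0 ≤ (x 0 - v 0) * u₂ 1 - (x 1 - v 1) * u₂ 0 ∧
        0 ≤ u₁ 0 * (x 1 - v 1) - u₁ 1 * (x 0 - v 0) := by
  simp only [cone, mem_ofPred_eq, add_assoc, ← sub_eq_iff_eq_add', eq_smul_add_smul_iff hdet,
    PiLp.sub_apply]
  constructor
  · rintro ⟨t₁, t₂, h₁, h₂, rfl, rfl⟩
    exact ⟨h₁, h₂⟩
  · rintro ⟨h₁, h₂⟩
    exact ⟨_, _, h₁, h₂, rfl, rfl⟩

lemma linearIndependent_vec (hdet : u₁ 0 * u₂ 1 - u₁ 1 * u₂ 0 = 1) :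
    LinearIndependent ℝ ![vec u₁, vec u₂] := by
  refine LinearIndependent.pair_iff.2 fun s t hst => ?_
  simpa using (eq_smul_add_smul_iff hdet 0 s t).1 hst.symm

lemma isDelzantVertex_of_forall_mem_iff {S : Set Plane} {ε : ℝ} (hε : 0 < ε)
    (hdet : u₁ 0 * u₂ 1 - u₁ 1 * u₂ 0 = 1)
    (h : ∀ x ∈ closedBall v ε, x ∈ S ↔
      0 ≤ (x 0 - v 0) * u₂ 1 - (x 1 - v 1) * u₂ 0 ∧
        0 ≤ u₁ 0 * (x 1 - v 1) - u₁ 1 * (x 0 - v 0)) :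
    IsDelzantVertex S v :=
  ⟨u₁, u₂, linearIndependent_vec hdet, Or.inl hdet, ε, hε,
    Set.ext fun x => and_congr_left fun hx => (h x hx).trans (mem_cone_iff hdet).symm⟩

lemma two_dvd_det (h₀ : u₁ 0 = 0 ∨ u₂ 0 = 0)
    (h₁ : u₁ 0 + 2 * u₁ 1 = 0 ∨ u₂ 0 + 2 * u₂ 1 = 0) : 2 ∣ u₁ 0 * u₂ 1 - u₁ 1 * u₂ 0 := by
  rcases h₀ with h₀ | h₀ <;> rcases h₁ with h₁ | h₁
  · exact ⟨0, by rw [h₀, show u₁ 1 = 0 by omega]; ring⟩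
  · exact ⟨u₁ 1 * u₂ 1, by linear_combination u₂ 1 * h₀ - u₁ 1 * h₁⟩
  · exact ⟨-(u₁ 1 * u₂ 1), by linear_combination -(u₁ 1) * h₀ + u₂ 1 * h₁⟩
  · exact ⟨0, by rw [h₀, show u₂ 1 = 0 by omega]; ring⟩

end Cone

def H (r : ℝ) : Set Plane :=
  {x : Plane | -(1/2) ≤ x 1 ∧ x 1 ≤ 1/2 ∧ 0 ≤ x 0 ∧ x 0 ≤ r + 1 - 2 * x 1}

lemma Htrap_eq_H (n : ℕ) : Htrap n = H (1 / n) := rfl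

section Trapezoid

variable {r : ℝ}

lemma H_mono : Monotone H := fun _ _ hrs _ ⟨h₁, h₂, h₃, h₄⟩ => ⟨h₁, h₂, h₃, by linarith⟩

lemma convex_H (r : ℝ) : Convex ℝ (H r) := by
  rintro x ⟨h₁, h₂, h₃, h₄⟩ y ⟨k₁, k₂, k₃, k₄⟩ a b ha hb hab
  simp only [H, mem_ofPred_eq, PiLp.add_apply, PiLp.smul_apply, smul_eq_mul]
  refine ⟨?_, ?_, ?_, ?_⟩ <;> nlinarith

def vertices (r : ℝ) : Set Plane :=
  {pt 0 (-(1/2)), pt 0 (1/2), pt r (1/2), pt (r + 2) (-(1/2))}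

/-- Every horizontal chord of `H r` joins a point of the left edge to a point of the slanted
edge. -/
lemma H_eq_convexHull (hr : 0 ≤ r) : H r = convexHull ℝ (vertices r) := by
  refine Subset.antisymm (fun x ⟨h₁, h₂, h₃, h₄⟩ => ?_) (convexHull_min ?_ (convex_H r))
  · have hL : pt 0 (x 1) ∈ convexHull ℝ (vertices r) :=
      segment_subset_convexHull (x := pt 0 (-(1/2))) (y := pt 0 (1/2))
        (by simp [vertices]) (by simp [vertices])
        (mem_segment_of_apply (θ := x 1 + 1/2) (by linarith) (by linarith)
          (by simp) (by simp; ring))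
    have hR : pt (r + 1 - 2 * x 1) (x 1) ∈ convexHull ℝ (vertices r) :=
      segment_subset_convexHull (x := pt (r + 2) (-(1/2))) (y := pt r (1/2))
        (by simp [vertices]) (by simp [vertices])
        (mem_segment_of_apply (θ := x 1 + 1/2) (by linarith) (by linarith)
          (by simp; ring) (by simp; ring))
    refine (convex_convexHull ℝ _).segment_subset hL hR
      (mem_segment_of_apply (θ := x 0 / (r + 1 - 2 * x 1)) (div_nonneg h₃ (by linarith)) ?_ ?_
        (by simp; ring))
    · exact div_le_one_of_le₀ h₄ (by linarith)
    · simp [div_mul_cancel_of_imp fun h => le_antisymm (h ▸ h₄) h₃]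
  · rintro v (rfl | rfl | rfl | rfl) <;> refine ⟨?_, ?_, ?_, ?_⟩ <;> simp <;> linarith

lemma isCompact_H (hr : 0 ≤ r) : IsCompact (H r) := by
  rw [H_eq_convexHull hr]
  exact (((finite_singleton _).insert _).insert _).insert _ |>.isCompact_convexHull ℝ

lemma extremePoints_H_subset (hr : 0 ≤ r) : (H r).extremePoints ℝ ⊆ vertices r := by
  rw [H_eq_convexHull hr]
  exact extremePoints_convexHull_subset

lemma volume_H_pos (hr : 0 ≤ r) : 0 < volume (H r) := by
  refine (measure_ball_pos volume (pt (1/2) (-(1/4))) (by norm_num : (0:ℝ) < 1/4)).trans_le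
    (measure_mono fun x hx => ?_)
  have h₀ := abs_le.1 ((abs_sub_apply_le_dist x _ 0).trans (mem_ball.1 hx).le)
  have h₁ := abs_le.1 ((abs_sub_apply_le_dist x _ 1).trans (mem_ball.1 hx).le)
  simp only [pt_apply_zero, pt_apply_one] at h₀ h₁
  refine ⟨?_, ?_, ?_, ?_⟩ <;> linarith

/-- The radius `min r (1/3)` keeps each vertex away from the two edges not through it. -/
lemma isDelzantVertex_H (hr : 0 < r) {v : Plane} (hv : v ∈ vertices r) :
    IsDelzantVertex (H r) v := by
  have hε : 0 < min r (1/3) := lt_min hr (by norm_num)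
  rcases hv with rfl | rfl | rfl | rfl <;>
  [refine isDelzantVertex_of_forall_mem_iff (u₁ := ![1, 0]) (u₂ := ![0, 1]) hε (by decide) ?_;
   refine isDelzantVertex_of_forall_mem_iff (u₁ := ![0, -1]) (u₂ := ![1, 0]) hε (by decide) ?_;
   refine isDelzantVertex_of_forall_mem_iff (u₁ := ![-1, 0]) (u₂ := ![2, -1]) hε (by decide) ?_;
   refine isDelzantVertex_of_forall_mem_iff (u₁ := ![-2, 1]) (u₂ := ![-1, 0]) hε (by decide) ?_]
  <;>
  · intro x hx
    have h₀ := abs_le.1 ((abs_sub_apply_le_dist x _ 0).trans (mem_closedBall.1 hx))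
    have h₁ := abs_le.1 ((abs_sub_apply_le_dist x _ 1).trans (mem_closedBall.1 hx))
    have hεr := min_le_left r (1/3)
    have hε₃ := min_le_right r (1/3)
    simp only [H, mem_ofPred_eq, pt_apply_zero, pt_apply_one, Matrix.cons_val_zero,
      Matrix.cons_val_one, Int.cast_zero, Int.cast_one, Int.cast_neg, Int.cast_ofNat] at h₀ h₁ ⊢
    constructor
    · rintro ⟨k₁, k₂, k₃, k₄⟩
      constructor <;> linarith
    · rintro ⟨k₁, k₂⟩
      refine ⟨?_, ?_, ?_, ?_⟩ <;> linarith

theorem isDelzant_H (hr : 0 < r) : IsDelzant (H r) :=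
  isDelzant_iff.2 ⟨isCompact_H hr.le, convex_H r, volume_H_pos hr.le,
    fun _ hv => isDelzantVertex_H hr (extremePoints_H_subset hr.le hv)⟩

end Trapezoid

lemma iInter_H_one_div_succ : ⋂ n : ℕ, H (1 / (n + 1)) = H 0 := by
  refine Subset.antisymm (fun x hx => ?_) (subset_iInter fun n => H_mono (by positivity))
  obtain ⟨h₁, h₂, h₃, -⟩ := mem_iInter.1 hx 0
  have hlim :
      Tendsto (fun n : ℕ => 1 / (n + 1 : ℝ) + 1 - 2 * x 1) atTop (𝓝 (0 + 1 - 2 * x 1)) := by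
    simpa only [add_sub_assoc] using tendsto_one_div_add_atTop_nhds_zero_nat.add_const _
  exact ⟨h₁, h₂, h₃, ge_of_tendsto hlim (.of_forall fun n => (mem_iInter.1 hx n).2.2.2)⟩

lemma tendsto_volume_Htrap_symmDiff_H_zero :
    Tendsto (fun n => volume (Htrap n ∆ H 0)) atTop (𝓝 0) := by
  have hsub (n : ℕ) : H 0 ⊆ Htrap n := H_mono (by positivity)
  simp only [symmDiff_of_ge (hsub _)]
  rw [← tendsto_add_atTop_iff_nat 1]
  have hmeas (r : ℝ) (hr : 0 ≤ r) : MeasurableSet (H r) := (isCompact_H hr).isClosed.measurableSet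
  have := tendsto_measure_iInter_atTop (μ := volume) (s := fun n : ℕ => H (1 / (n + 1)) \ H 0)
    (fun n => ((hmeas _ (by positivity)).diff (hmeas 0 le_rfl)).nullMeasurableSet)
    (fun m n hmn => sdiff_subset_sdiff_left (H_mono (Nat.one_div_le_one_div hmn)))
    ⟨0, ((measure_mono sdiff_subset).trans_lt (isCompact_H (by positivity)).measure_lt_top).ne⟩
  have hempty : ⋂ n : ℕ, H (1 / (n + 1)) \ H 0 = ∅ := by
    refine eq_empty_of_forall_notMem fun x hx => ?_
    simp only [mem_iInter, Set.mem_sdiff] at hx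
    exact (hx 0).2 (iInter_H_one_div_succ ▸ mem_iInter.2 fun n => (hx n).1)
  rw [hempty, measure_empty] at this
  simpa [Htrap_eq_H, Function.comp_def] using this

lemma pt_mem_extremePoints_H_zero : pt 0 (1/2) ∈ (H 0).extremePoints ℝ := by
  refine exposedPoints_subset_extremePoints
    ⟨by norm_num [H], EuclideanSpace.proj 1 - EuclideanSpace.proj 0, fun y ⟨h₁, h₂, h₃, h₄⟩ => ?_⟩
  simp only [FunLike.coe_sub, Pi.sub_apply, EuclideanSpace.coe_proj, pt_apply_zero,
    pt_apply_one]
  exact ⟨by linarith, fun h => Plane.ext_iff'.2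
    ⟨by rw [pt_apply_zero]; linarith, by rw [pt_apply_one]; linarith⟩⟩

lemma apply_nonneg_of_add_smul_mem_H_zero {w : Plane} {t : ℝ} (ht : 0 < t)
    (h : pt 0 (1/2) + t • w ∈ H 0) : 0 ≤ w 0 ∧ 0 ≤ -(w 0 + 2 * w 1) := by
  obtain ⟨-, -, h₃, h₄⟩ := h
  simp only [PiLp.add_apply, PiLp.smul_apply, smul_eq_mul, pt_apply_zero, pt_apply_one] at h₃ h₄
  constructor <;> nlinarith

/-- A cone spanned by `u₁, u₂` that coincides with `H 0` near `(0, 1/2)` lies between the edge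
rays `ℝ≥0 (0, -1)` and `ℝ≥0 (2, -1)` and contains both, which forces one `uᵢ` onto each ray, so
that `det (u₁, u₂)` is even. -/
theorem not_isDelzant_H_zero : ¬ IsDelzant (H 0) := by
  intro hΔ
  obtain ⟨u₁, u₂, -, hdet, ε, hε, hloc⟩ :=
    (isDelzant_iff.1 hΔ).2.2.2 _ pt_mem_extremePoints_H_zero
  let φ₀ : Plane →ₗ[ℝ] ℝ := EuclideanSpace.projₗ 0
  let φ₁ : Plane →ₗ[ℝ] ℝ := -(EuclideanSpace.projₗ 0 + 2 • EuclideanSpace.projₗ 1)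
  have hgen (u) (hu : u = u₁ ∨ u = u₂) : 0 ≤ φ₀ (vec u) ∧ 0 ≤ φ₁ (vec u) := by
    obtain ⟨t, ht, hmem⟩ := exists_pos_add_smul_mem_of_inter_closedBall_eq (w := vec u) hε
      hloc.symm fun t ht _ => by
        rcases hu with rfl | rfl
        exacts [⟨t, 0, ht.le, le_rfl, by simp⟩, ⟨0, t, le_rfl, ht.le, by simp⟩]
    simpa [φ₀, φ₁, vec] using apply_nonneg_of_add_smul_mem_H_zero ht hmem
  have hedge (w : Plane) (hw : ∀ t : ℝ, 0 < t → t ≤ 1 → pt 0 (1/2) + t • w ∈ H 0) :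
      ∃ t : ℝ, 0 < t ∧ ∃ t₁ t₂ : ℝ, 0 ≤ t₁ ∧ 0 ≤ t₂ ∧ t • w = t₁ • vec u₁ + t₂ • vec u₂ := by
    obtain ⟨t, ht, t₁, t₂, ht₁, ht₂, heq⟩ :=
      exists_pos_add_smul_mem_of_inter_closedBall_eq hε hloc hw
    exact ⟨t, ht, t₁, t₂, ht₁, ht₂, add_left_cancel (heq.trans (add_assoc _ _ _))⟩
  obtain ⟨s, hs, a₁, a₂, ha₁, ha₂, hs_eq⟩ := hedge (pt 0 (-1)) fun t ht ht₁ => by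
    refine ⟨?_, ?_, ?_, ?_⟩ <;>
      simp only [PiLp.add_apply, PiLp.smul_apply, smul_eq_mul, pt_apply_zero, pt_apply_one] <;>
      linarith
  obtain ⟨s', hs', b₁, b₂, hb₁, hb₂, hs'_eq⟩ := hedge (pt 2 (-1)) fun t ht ht₁ => by
    refine ⟨?_, ?_, ?_, ?_⟩ <;>
      simp only [PiLp.add_apply, PiLp.smul_apply, smul_eq_mul, pt_apply_zero, pt_apply_one] <;>
      linarith
  have h₀ := map_eq_zero_or_map_eq_zero_of_smul_add_smul φ₀ ha₁ ha₂ (hgen u₁ (.inl rfl)).1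
    (hgen u₂ (.inr rfl)).1 (hs_eq ▸ smul_ne_zero hs.ne' (by simp [Plane.ext_iff'])) (by
      simp [← hs_eq, φ₀])
  have h₁ := map_eq_zero_or_map_eq_zero_of_smul_add_smul φ₁ hb₁ hb₂ (hgen u₁ (.inl rfl)).2
    (hgen u₂ (.inr rfl)).2 (hs'_eq ▸ smul_ne_zero hs'.ne' (by simp [Plane.ext_iff'])) (by
      simp [← hs'_eq, φ₁])
  simp only [φ₀, φ₁, vec, LinearMap.neg_apply, LinearMap.add_apply, LinearMap.smul_apply,
    PiLp.projₗ_apply, nsmul_eq_mul, Nat.cast_ofNat, neg_eq_zero] at h₀ h₁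
  replace h₀ : (u₁ 0 : ℝ) = 0 ∨ (u₂ 0 : ℝ) = 0 := h₀
  replace h₁ : (u₁ 0 : ℝ) + 2 * u₁ 1 = 0 ∨ (u₂ 0 : ℝ) + 2 * u₂ 1 = 0 := h₁
  have := two_dvd_det (by exact_mod_cast h₀) (by exact_mod_cast h₁)
  omega

/-- The space of Delzant polygons with the symmetric-difference metric is not complete:
the `Htrap n` are Delzant, form a Cauchy sequence, but have no Delzant limit. -/
theorem delzant_not_complete :
    (∀ n : ℕ, 1 ≤ n → IsDelzant (Htrap n)) ∧
    (∀ ε : ℝ, 0 < ε → ∃ N : ℕ, ∀ m n : ℕ, N ≤ m → N ≤ n →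
      volume (symmDiff (Htrap m) (Htrap n)) < ENNReal.ofReal ε) ∧
    ¬ ∃ Δ : Set Plane, IsDelzant Δ ∧
        Tendsto (fun n => volume (symmDiff (Htrap n) Δ)) atTop (nhds 0) := by
  refine ⟨fun n hn => ?_, fun ε hε => ?_, ?_⟩
  · exact Htrap_eq_H n ▸ isDelzant_H (one_div_pos.2 (by exact_mod_cast hn))
  · exact exists_forall_ge_measure_symmDiff_lt tendsto_volume_Htrap_symmDiff_H_zero hε
  · rintro ⟨Δ, hΔ, hlim⟩
    obtain ⟨hΔc, hΔconv, hΔ₀, -⟩ := id hΔ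
    have hnull := measure_symmDiff_eq_zero_of_tendsto tendsto_volume_Htrap_symmDiff_H_zero hlim
    have hH : H 0 = Δ := (convex_H 0).eq_of_measure_symmDiff_eq_zero volume hΔconv
      (isCompact_H le_rfl).isClosed hΔc.isClosed (volume_H_pos le_rfl) hΔ₀ hnull
    exact not_isDelzant_H_zero (hH ▸ hΔ)
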